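/- arXiv:1508.07775 — 2 statements merged into one kernel-verified Lean document; each statement's English description precedes it below -/
import Mathlib

section
/- If frequencies ω₁,…,ω_N are rationally independent, then for any continuous function f on the N-torus, lim_{T→∞} (1/T) ∫₀ᵀ f(ω₁t, …, ω_N t) dt = ∫_𝕋 f dφ, where dφ is normalized Haar measure. -/
open MeasureTheory Real Filter

instance : Fact (0 < 2 * Real.pi) := ⟨by positivity⟩

noncomputable section WeylAux

open AddCircle Submodule

namespace WeylAux

variable {N : ℕ}

/-- The torus measure: product of normalized Haar measures. -/
abbrev torusμ (N : ℕ) : Measure (Fin N → AddCircle (2 * Real.pi)) :=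
  Measure.pi fun _ => AddCircle.haarAddCircle

/-- Coordinate projection as a continuous map. -/
def proj (N : ℕ) (i : Fin N) : C(Fin N → AddCircle (2 * Real.pi), AddCircle (2 * Real.pi)) :=
  ⟨fun φ => φ i, continuous_apply i⟩

/-- Characters of the torus. -/
def tchar (N : ℕ) (m : Fin N → ℤ) : C(Fin N → AddCircle (2 * Real.pi), ℂ) :=
  ∏ i, (fourier (m i)).comp (proj N i)

lemma tchar_apply (m : Fin N → ℤ) (φ : Fin N → AddCircle (2 * Real.pi)) :
    tchar N m φ = ∏ i, fourier (m i) (φ i) := by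
  simp [tchar, proj]

lemma fourier_arg_add {T : ℝ} {n : ℤ} (x y : AddCircle T) :
    fourier n (x + y) = fourier n x * fourier n y := by
  simp_rw [fourier_apply, smul_add, toCircle_add, Circle.coe_mul]

lemma tchar_hom (m : Fin N → ℤ) (φ ψ : Fin N → AddCircle (2 * Real.pi)) :
    tchar N m (φ + ψ) = tchar N m φ * tchar N m ψ := by
  simp_rw [tchar_apply, Pi.add_apply, fourier_arg_add, Finset.prod_mul_distrib]

lemma tchar_zero : tchar N 0 = 1 := by
  ext φ
  simp [tchar_apply, fourier_zero]

lemma tchar_mul (m n : Fin N → ℤ) : tchar N m * tchar N n = tchar N (m + n) := by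
  ext φ
  simp [tchar_apply, Pi.add_apply, fourier_add, Finset.prod_mul_distrib]

lemma tchar_star (m : Fin N → ℤ) : tchar N (-m) = star (tchar N m) := by
  ext φ
  simp only [tchar_apply, ContinuousMap.star_apply, Pi.neg_apply]
  calc ∏ i, (fourier (-m i) : C(AddCircle (2 * Real.pi), ℂ)) (φ i)
      = ∏ i, starRingEnd ℂ ((fourier (m i)) (φ i)) :=
        Finset.prod_congr rfl fun i _ => fourier_neg
    _ = starRingEnd ℂ (∏ i, (fourier (m i)) (φ i)) := (map_prod _ _ _).symm
    _ = star (∏ i, (fourier (m i)) (φ i)) := rfl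

lemma integral_tchar_eq_zero {m : Fin N → ℤ} (hm : m ≠ 0) :
    ∫ φ, tchar N m φ ∂(torusμ N) = 0 := by
  obtain ⟨i, hi⟩ := Function.ne_iff.mp hm
  have hi' : m i ≠ 0 := by simpa using hi
  set a : Fin N → AddCircle (2 * Real.pi) :=
    Pi.single i (((2 * Real.pi) / 2 / (m i : ℝ) : ℝ) : AddCircle (2 * Real.pi)) with ha_def
  have ha : tchar N m a = -1 := by
    rw [tchar_apply, Finset.prod_eq_single i
      (fun j _ hj => by simp [ha_def, Pi.single_eq_of_ne hj, fourier_eval_zero])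
      (by simp)]
    have := fourier_add_half_inv_index hi' (by positivity : (0:ℝ) < 2 * Real.pi)
      (0 : AddCircle (2 * Real.pi))
    rw [zero_add, fourier_eval_zero] at this
    simpa [ha_def] using this
  have key : ∫ φ, tchar N m φ ∂(torusμ N) = tchar N m a * ∫ φ, tchar N m φ ∂(torusμ N) := by
    conv_lhs => rw [← integral_add_left_eq_self (μ := torusμ N) (fun φ => tchar N m φ) a]
    simp_rw [tchar_hom m a, integral_const_mul]
  rw [ha, neg_one_mul] at key
  have h2 : (2:ℂ) * ∫ φ, tchar N m φ ∂(torusμ N) = 0 := by linear_combination key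
  simpa using h2

/-- The star subalgebra generated by the characters. -/
def torusSubalgebra (N : ℕ) : StarSubalgebra ℂ C(Fin N → AddCircle (2 * Real.pi), ℂ) where
  toSubalgebra := Algebra.adjoin ℂ (Set.range (tchar N))
  star_mem' := by
    show Algebra.adjoin ℂ (Set.range (tchar N)) ≤ star (Algebra.adjoin ℂ (Set.range (tchar N)))
    refine Algebra.adjoin_le ?_
    rintro - ⟨m, rfl⟩
    exact Algebra.subset_adjoin ⟨-m, tchar_star m⟩

lemma torusSubalgebra_coe (N : ℕ) :
    Subalgebra.toSubmodule (torusSubalgebra N).toSubalgebra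
      = span ℂ (Set.range (tchar N)) := by
  apply Algebra.adjoin_eq_span_of_subset
  refine Set.Subset.trans ?_ Submodule.subset_span
  intro x hx
  refine Submonoid.closure_induction (fun _ => id) ⟨0, tchar_zero⟩ ?_ hx
  rintro - - - - ⟨m, rfl⟩ ⟨n, rfl⟩
  exact ⟨m + n, (tchar_mul m n).symm⟩

lemma tchar_single (i : Fin N) (φ : Fin N → AddCircle (2 * Real.pi)) :
    tchar N (Pi.single i 1) φ = toCircle (φ i) := by
  rw [tchar_apply, Finset.prod_eq_single i
    (fun j _ hj => by simp [Pi.single_eq_of_ne hj, fourier_zero])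
    (by simp)]
  simp [fourier_one]

lemma torusSubalgebra_separatesPoints (N : ℕ) : (torusSubalgebra N).SeparatesPoints := by
  intro φ ψ hne
  obtain ⟨i, hi⟩ := Function.ne_iff.mp hne
  refine ⟨_, ⟨tchar N (Pi.single i 1), Algebra.subset_adjoin ⟨_, rfl⟩, rfl⟩, ?_⟩
  dsimp only
  rw [tchar_single, tchar_single]
  intro h
  exact hi (injective_toCircle (by positivity : (0:ℝ) < 2 * Real.pi).ne'
    (Subtype.coe_inj.mp h))

lemma span_tchar_closure_eq_top (N : ℕ) :
    (span ℂ (Set.range (tchar N))).topologicalClosure = ⊤ := by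
  rw [← torusSubalgebra_coe]
  exact congr_arg (Subalgebra.toSubmodule <| StarSubalgebra.toSubalgebra ·)
    (ContinuousMap.starSubalgebra_topologicalClosure_eq_top_of_separatesPoints _
      (torusSubalgebra_separatesPoints N))

/-- The winding curve. -/
def curve (ω : Fin N → ℝ) (t : ℝ) : Fin N → AddCircle (2 * Real.pi) :=
  fun i => ((ω i * t : ℝ) : AddCircle (2 * Real.pi))

lemma continuous_curve (ω : Fin N → ℝ) : Continuous (curve ω) :=
  continuous_pi fun i => (AddCircle.continuous_mk' (2 * Real.pi)).comp (continuous_const.mul continuous_id)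

lemma tchar_curve (ω : Fin N → ℝ) (m : Fin N → ℤ) (t : ℝ) :
    tchar N m (curve ω t)
      = Complex.exp ((((∑ i, (m i : ℝ) * ω i) * t : ℝ) : ℂ) * Complex.I) := by
  rw [tchar_apply]
  have h2π : ((2 * Real.pi : ℝ) : ℂ) ≠ 0 := by
    exact_mod_cast (by positivity : (0:ℝ) < 2 * Real.pi).ne'
  have hterm : ∀ i, (fourier (m i) (((ω i * t : ℝ) : AddCircle (2 * Real.pi))) : ℂ)
      = Complex.exp ((((m i : ℝ) * ω i * t : ℝ) : ℂ) * Complex.I) := by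
    intro i
    rw [fourier_coe_apply]
    have hπ : (Real.pi : ℂ) ≠ 0 := by exact_mod_cast Real.pi_ne_zero
    congr 1
    push_cast
    field_simp
  simp_rw [curve, hterm, ← Complex.exp_sum]
  congr 1
  push_cast
  rw [← Finset.sum_mul, ← Finset.sum_mul]

lemma avg_exp_tendsto {l : ℝ} (hl : l ≠ 0) :
    Tendsto (fun T : ℝ => (1 / T : ℝ) •
        ∫ t in (0:ℝ)..T, Complex.exp (((l * t : ℝ) : ℂ) * Complex.I))
      atTop (nhds 0) := by
  have hc : (l : ℂ) * Complex.I ≠ 0 :=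
    mul_ne_zero (by exact_mod_cast hl) Complex.I_ne_zero
  have heval : ∀ T : ℝ, (∫ t in (0:ℝ)..T, Complex.exp (((l * t : ℝ) : ℂ) * Complex.I))
      = (Complex.exp ((l : ℂ) * Complex.I * T) - 1) / ((l : ℂ) * Complex.I) := by
    intro T
    have h1 : ∀ t : ℝ, ((l * t : ℝ) : ℂ) * Complex.I = ((l : ℂ) * Complex.I) * (t : ℂ) := by
      intro t; push_cast; ring
    simp_rw [h1]
    rw [integral_exp_mul_complex hc]
    norm_num
  apply squeeze_zero_norm' (a := fun T : ℝ => (2 / ‖(l : ℂ) * Complex.I‖) * T⁻¹)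
  · filter_upwards [eventually_gt_atTop (0:ℝ)] with T hT
    rw [heval, norm_smul]
    have hnorm : ‖Complex.exp ((l : ℂ) * Complex.I * T) - 1‖ ≤ 2 := by
      refine (norm_sub_le _ _).trans ?_
      have h2 : ‖Complex.exp ((l : ℂ) * Complex.I * T)‖ = 1 := by
        have h3 : (l : ℂ) * Complex.I * T = ((l * T : ℝ) : ℂ) * Complex.I := by push_cast; ring
        rw [h3, Complex.norm_exp_ofReal_mul_I]
      rw [h2, norm_one]; norm_num
    have h1T : ‖(1 / T : ℝ)‖ = 1 / T := by
      rw [Real.norm_eq_abs, abs_of_pos (by positivity)]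
    rw [h1T, norm_div]
    have hcpos : 0 < ‖(l : ℂ) * Complex.I‖ := norm_pos_iff.mpr hc
    calc (1 / T) * (‖Complex.exp ((l:ℂ) * Complex.I * T) - 1‖ / ‖(l:ℂ) * Complex.I‖)
        ≤ (1 / T) * (2 / ‖(l:ℂ) * Complex.I‖) := by gcongr
      _ = (2 / ‖(l:ℂ) * Complex.I‖) * T⁻¹ := by rw [one_div]; ring
  · simpa using tendsto_inv_atTop_zero.const_mul (2 / ‖(l : ℂ) * Complex.I‖)

lemma tendsto_avg (N : ℕ) (ω : Fin N → ℝ)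
    (hres : ∀ m : Fin N → ℤ, (∑ i, (m i : ℝ) * ω i) = 0 → m = 0)
    (g : C(Fin N → AddCircle (2 * Real.pi), ℂ)) :
    Tendsto (fun T : ℝ => (1 / T : ℝ) • ∫ t in (0:ℝ)..T, g (curve ω t)) atTop
      (nhds (∫ φ, g φ ∂(torusμ N))) := by
  classical
  have hint : ∀ h : C(Fin N → AddCircle (2 * Real.pi), ℂ),
      Integrable (fun φ => h φ) (torusμ N) :=
    fun h => h.continuous.integrable_of_hasCompactSupport
      ((isClosed_tsupport _).isCompact)
  have hci : ∀ (h : C(Fin N → AddCircle (2 * Real.pi), ℂ)) (T : ℝ),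
      IntervalIntegrable (fun t => h (curve ω t)) volume 0 T :=
    fun h T => (h.continuous.comp (continuous_curve ω)).intervalIntegrable 0 T
  set S : Set C(Fin N → AddCircle (2 * Real.pi), ℂ) :=
    {g | Tendsto (fun T : ℝ => (1 / T : ℝ) • ∫ t in (0:ℝ)..T, g (curve ω t)) atTop
      (nhds (∫ φ, g φ ∂(torusμ N)))} with hS
  suffices hall : g ∈ S by exact hall
  -- characters belong to S
  have hchar : ∀ m : Fin N → ℤ, tchar N m ∈ S := by
    intro m
    by_cases hm : m = 0
    · subst hm
      rw [hS, Set.mem_setOf_eq, tchar_zero]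
      have h1 : (∫ φ, (1 : C(Fin N → AddCircle (2 * Real.pi), ℂ)) φ ∂(torusμ N)) = 1 := by
        simp
      rw [h1]
      refine Tendsto.congr' ?_ tendsto_const_nhds
      filter_upwards [eventually_ne_atTop (0:ℝ)] with T hT
      simp only [ContinuousMap.one_apply, intervalIntegral.integral_const, sub_zero,
        smul_eq_mul, one_smul, smul_smul]
      rw [one_div, inv_mul_cancel₀ hT, one_smul]
    · have hlam : (∑ i, (m i : ℝ) * ω i) ≠ 0 := fun h => hm (hres m h)
      rw [hS, Set.mem_setOf_eq, integral_tchar_eq_zero hm]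
      refine Tendsto.congr (fun T => ?_) (avg_exp_tendsto hlam)
      congr 1
      refine intervalIntegral.integral_congr fun t _ => ?_
      exact (tchar_curve ω m t).symm
  -- the span of characters is contained in S
  have hspan : ∀ h ∈ span ℂ (Set.range (tchar N)), h ∈ S := by
    intro h hh
    refine Submodule.span_induction (p := fun x _ => x ∈ S) ?_ ?_ ?_ ?_ hh
    · rintro - ⟨m, rfl⟩
      exact hchar m
    · show (0 : C(Fin N → AddCircle (2 * Real.pi), ℂ)) ∈ S
      rw [hS, Set.mem_setOf_eq]
      simp only [ContinuousMap.zero_apply, intervalIntegral.integral_zero, smul_zero,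
        integral_zero]
      exact tendsto_const_nhds
    · intro x y hx hy hxS hyS
      show x + y ∈ S
      rw [hS, Set.mem_setOf_eq]
      rw [hS, Set.mem_setOf_eq] at hxS hyS
      have hxy : (∫ φ, (x + y) φ ∂(torusμ N)) = (∫ φ, x φ ∂(torusμ N)) + ∫ φ, y φ ∂(torusμ N) := by
        simp only [ContinuousMap.add_apply]
        exact integral_add (hint x) (hint y)
      rw [hxy]
      refine Tendsto.congr (fun T => ?_) (hxS.add hyS)
      simp only [ContinuousMap.add_apply]
      rw [intervalIntegral.integral_add (hci x T) (hci y T), smul_add]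
    · intro c x hx hxS
      show c • x ∈ S
      rw [hS, Set.mem_setOf_eq]
      rw [hS, Set.mem_setOf_eq] at hxS
      have hcx : (∫ φ, (c • x) φ ∂(torusμ N)) = c • ∫ φ, x φ ∂(torusμ N) := by
        simp only [ContinuousMap.smul_apply]
        exact integral_smul c _
      rw [hcx]
      refine Tendsto.congr (fun T => ?_) (hxS.const_smul c)
      simp only [ContinuousMap.smul_apply]
      rw [intervalIntegral.integral_smul, smul_comm]
  -- S is dense-closed: conclude for arbitrary g
  have hgmem : g ∈ closure (span ℂ (Set.range (tchar N)) : Set _) := by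
    have h1 : g ∈ (span ℂ (Set.range (tchar N))).topologicalClosure := by
      rw [span_tchar_closure_eq_top N]; trivial
    exact h1
  rw [hS, Set.mem_setOf_eq, Metric.tendsto_nhds]
  intro ε hε
  obtain ⟨h, hhmem, hdist⟩ := Metric.mem_closure_iff.mp hgmem (ε/4) (by positivity)
  have hgh : ‖g - h‖ < ε/4 := by rwa [← dist_eq_norm]
  have hhS := hspan h hhmem
  rw [hS, Set.mem_setOf_eq] at hhS
  have h1 := (Metric.tendsto_nhds.mp hhS) (ε/4) (by positivity)
  filter_upwards [h1, eventually_gt_atTop (0:ℝ)] with T hT1 hT2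
  have key1 : dist ((1/T:ℝ) • ∫ t in (0:ℝ)..T, g (curve ω t))
      ((1/T:ℝ) • ∫ t in (0:ℝ)..T, h (curve ω t)) ≤ ‖g - h‖ := by
    rw [dist_eq_norm, ← smul_sub, ← intervalIntegral.integral_sub (hci g T) (hci h T),
      norm_smul]
    have hb : ‖∫ t in (0:ℝ)..T, (g (curve ω t) - h (curve ω t))‖ ≤ ‖g - h‖ * |T - 0| := by
      apply intervalIntegral.norm_integral_le_of_norm_le_const
      intro t _
      calc ‖g (curve ω t) - h (curve ω t)‖ = ‖(g - h) (curve ω t)‖ := by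
            rw [ContinuousMap.sub_apply]
        _ ≤ ‖g - h‖ := ContinuousMap.norm_coe_le_norm _ _
    have hTnorm : ‖(1/T : ℝ)‖ = 1/T := by rw [Real.norm_eq_abs, abs_of_pos (by positivity)]
    rw [hTnorm]
    calc (1/T) * ‖∫ t in (0:ℝ)..T, (g (curve ω t) - h (curve ω t))‖
        ≤ (1/T) * (‖g - h‖ * |T - 0|) := by
          have : (0:ℝ) ≤ 1/T := by positivity
          exact mul_le_mul_of_nonneg_left hb this
      _ = ‖g - h‖ := by rw [sub_zero, abs_of_pos hT2]; field_simp
  have key2 : dist (∫ φ, h φ ∂(torusμ N)) (∫ φ, g φ ∂(torusμ N)) ≤ ‖g - h‖ := by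
    rw [dist_eq_norm, ← integral_sub (hint h) (hint g)]
    have hb : ‖∫ φ, (h φ - g φ) ∂(torusμ N)‖ ≤ ‖g - h‖ * ((torusμ N) Set.univ).toReal := by
      apply norm_integral_le_of_norm_le_const
      apply Filter.Eventually.of_forall
      intro φ
      calc ‖h φ - g φ‖ = ‖(g - h) φ‖ := by rw [ContinuousMap.sub_apply, norm_sub_rev]
        _ ≤ ‖g - h‖ := ContinuousMap.norm_coe_le_norm _ _
    simpa [measure_univ] using hb
  calc dist ((1/T:ℝ) • ∫ t in (0:ℝ)..T, g (curve ω t)) (∫ φ, g φ ∂(torusμ N))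
      ≤ dist ((1/T:ℝ) • ∫ t in (0:ℝ)..T, g (curve ω t))
          ((1/T:ℝ) • ∫ t in (0:ℝ)..T, h (curve ω t))
        + dist ((1/T:ℝ) • ∫ t in (0:ℝ)..T, h (curve ω t)) (∫ φ, h φ ∂(torusμ N))
        + dist (∫ φ, h φ ∂(torusμ N)) (∫ φ, g φ ∂(torusμ N)) := dist_triangle4 _ _ _ _
    _ < ε := by linarith

end WeylAux

end WeylAux

/-- Weyl equidistribution: if the frequencies `ω i` are rationally independent, then for any
continuous function `f` on the `N`-torus, the time average of `f` along the rectilinear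
winding `t ↦ (ω₁ t, …, ω_N t)` converges to the space average with respect to
normalized Haar measure. -/
theorem weyl_equidistribution_torus
    (N : ℕ) (ω : Fin N → ℝ)
    (hres : ∀ m : Fin N → ℤ, (∑ i, (m i : ℝ) * ω i) = 0 → m = 0)
    (f : (Fin N → Real.Angle) → ℝ) (hf : Continuous f) :
    Tendsto (fun T : ℝ => (1 / T) * ∫ t in (0:ℝ)..T, f (fun i => ((ω i * t : ℝ) : Real.Angle)))
      atTop
      (nhds (∫ φ : Fin N → Real.Angle, f φ ∂(Measure.pi fun _ => AddCircle.haarAddCircle))) := by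
  let g₀ : C(Fin N → AddCircle (2 * Real.pi), ℂ) :=
    ⟨fun φ => (f φ : ℂ), Complex.continuous_ofReal.comp hf⟩
  have hg₀ := WeylAux.tendsto_avg N ω hres g₀
  have h1 : ∀ T : ℝ, (1/T : ℝ) • ∫ t in (0:ℝ)..T, g₀ (WeylAux.curve ω t)
      = (((1 / T) * ∫ t in (0:ℝ)..T, f (fun i => ((ω i * t : ℝ) : Real.Angle)) : ℝ) : ℂ) := by
    intro T
    have : (fun t => g₀ (WeylAux.curve ω t))
        = fun t => ((f (fun i => ((ω i * t : ℝ) : Real.Angle)) : ℝ) : ℂ) := rfl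
    rw [this, intervalIntegral.integral_ofReal, Complex.real_smul, ← Complex.ofReal_mul]
  have h2 : (∫ φ, g₀ φ ∂(WeylAux.torusμ N))
      = ((∫ φ : Fin N → Real.Angle, f φ
          ∂(Measure.pi fun _ => AddCircle.haarAddCircle) : ℝ) : ℂ) :=
    integral_ofReal
  rw [h2] at hg₀
  simp only [h1] at hg₀
  have h3 := (Complex.continuous_re.tendsto _).comp hg₀
  refine Tendsto.congr (fun T => ?_) h3
  simp [Function.comp]
end

section
/- The duality relation between the support function H of a smooth strictly convex body Ω containing 0 and its gauge function ρ holds: Id = ρ(x) · (∂²H/∂p²)(p) · (∂²ρ/∂x²)(x) + (∂ρ/∂x)(x) ⊗ (∂H/∂p)(p), where p = ∂ρ/∂x(x). -/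
open RealInnerProductSpace Topology Filter

set_option maxHeartbeats 1000000 in
/-- Duality relation between the support function `H` of a smooth strictly convex body `Ω`
containing `0` and its gauge (Minkowski) function `ρ`:
`Id = ρ(x) · (∂²H/∂p²)(p) ∘ (∂²ρ/∂x²)(x) + (∂ρ/∂x)(x) ⊗ (∂H/∂p)(p)` where `p = ∂ρ/∂x(x)`;
i.e. `w = ρ(x) • H''(p) (ρ''(x) w) + ⟨ρ'(x), w⟩ • H'(p)` for all `w`. -/
theorem support_gauge_duality
    (n : ℕ) (Ω : Set (EuclideanSpace ℝ (Fin n)))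
    (hΩconv : Convex ℝ Ω) (hΩcomp : IsCompact Ω) (hΩ0 : (0 : EuclideanSpace ℝ (Fin n)) ∈ interior Ω)
    (hΩstrict : StrictConvex ℝ Ω)
    (H : EuclideanSpace ℝ (Fin n) → ℝ)
    (hH : ∀ p, H p = sSup ((fun y => ⟪p, y⟫) '' Ω))
    (ρ : EuclideanSpace ℝ (Fin n) → ℝ) (hρ : ρ = gauge Ω)
    (ρ' H' : EuclideanSpace ℝ (Fin n) → EuclideanSpace ℝ (Fin n))
    (ρ'' H'' : EuclideanSpace ℝ (Fin n) → EuclideanSpace ℝ (Fin n) →L[ℝ] EuclideanSpace ℝ (Fin n))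
    (hρ' : ∀ x, x ≠ 0 → HasGradientAt ρ (ρ' x) x)
    (hH' : ∀ p, p ≠ 0 → HasGradientAt H (H' p) p)
    (hρ'' : ∀ x, x ≠ 0 → HasFDerivAt ρ' (ρ'' x) x)
    (hH'' : ∀ p, p ≠ 0 → HasFDerivAt H' (H'' p) p)
    (x : EuclideanSpace ℝ (Fin n)) (hx : x ≠ 0) :
    ∀ w : EuclideanSpace ℝ (Fin n),
      w = ρ x • (H'' (ρ' x)) ((ρ'' x) w) + ⟪ρ' x, w⟫ • H' (ρ' x) := by
  subst hρ
  have hnhds : Ω ∈ 𝓝 (0 : EuclideanSpace ℝ (Fin n)) := mem_interior_iff_mem_nhds.1 hΩ0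
  have habs : Absorbent ℝ Ω := absorbent_nhds_zero hnhds
  have hbd : Bornology.IsVonNBounded ℝ Ω := NormedSpace.isVonNBounded_of_isBounded _ hΩcomp.isBounded
  -- Euler identity for the 1-homogeneous function `gauge Ω`
  have euler : ∀ z : EuclideanSpace ℝ (Fin n), z ≠ 0 → ⟪ρ' z, z⟫ = gauge Ω z := by
    intro z hz
    have hfd : HasFDerivAt (gauge Ω) (InnerProductSpace.toDual ℝ (EuclideanSpace ℝ (Fin n)) (ρ' z)) z :=
      hasGradientAt_iff_hasFDerivAt.1 (hρ' z hz)
    have hsm : HasDerivAt (fun t : ℝ => t • z) z 1 := by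
      simpa using (hasDerivAt_id (1 : ℝ)).smul_const z
    have f1 : HasDerivAt (fun t : ℝ => gauge Ω (t • z)) ⟪ρ' z, z⟫ 1 := by
      have hfd' : HasFDerivAt (gauge Ω)
          (InnerProductSpace.toDual ℝ (EuclideanSpace ℝ (Fin n)) (ρ' z)) ((1:ℝ) • z) := by
        rw [one_smul]; exact hfd
      have := hfd'.comp_hasDerivAt 1 hsm
      simpa [InnerProductSpace.toDual_apply_apply, Function.comp_def] using this
    have f2 : HasDerivAt (fun t : ℝ => t * gauge Ω z) (gauge Ω z) 1 := by
      simpa using (hasDerivAt_id (1 : ℝ)).mul_const (gauge Ω z)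
    have hev : (fun t : ℝ => gauge Ω (t • z)) =ᶠ[𝓝 (1 : ℝ)] fun t => t * gauge Ω z := by
      filter_upwards [eventually_gt_nhds (zero_lt_one)] with t ht
      rw [gauge_smul_of_nonneg ht.le, smul_eq_mul]
    exact (f1.congr_of_eventuallyEq hev.symm |>.unique f2) ▸ rfl
  -- subgradient inequality: ⟪ρ' z, v⟫ ≤ gauge Ω v
  have subgrad : ∀ z : EuclideanSpace ℝ (Fin n), z ≠ 0 → ∀ v : EuclideanSpace ℝ (Fin n), ⟪ρ' z, v⟫ ≤ gauge Ω v := by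
    intro z hz v
    have hfd : HasFDerivAt (gauge Ω) (InnerProductSpace.toDual ℝ (EuclideanSpace ℝ (Fin n)) (ρ' z)) z :=
      hasGradientAt_iff_hasFDerivAt.1 (hρ' z hz)
    set h : ℝ → ℝ := fun t => gauge Ω z + t * gauge Ω v - gauge Ω (z + t • v) with hh
    have g2 : HasDerivAt (fun t : ℝ => gauge Ω (z + t • v)) ⟪ρ' z, v⟫ 0 := by
      have hin : HasDerivAt (fun t : ℝ => z + t • v) v 0 := by
        simpa using ((hasDerivAt_id (0 : ℝ)).smul_const v).const_add z
      have hz0 : z + (0 : ℝ) • v = z := by simp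
      have hfd' : HasFDerivAt (gauge Ω) (InnerProductSpace.toDual ℝ (EuclideanSpace ℝ (Fin n)) (ρ' z))
          ((fun t : ℝ => z + t • v) 0) := by simpa [hz0] using hfd
      have := hfd'.comp_hasDerivAt 0 hin
      simpa [InnerProductSpace.toDual_apply_apply, Function.comp_def] using this
    have g1 : HasDerivAt (fun t : ℝ => gauge Ω z + t * gauge Ω v) (gauge Ω v) 0 := by
      simpa using ((hasDerivAt_id (0 : ℝ)).mul_const (gauge Ω v)).const_add (gauge Ω z)
    have hd : HasDerivAt h (gauge Ω v - ⟪ρ' z, v⟫) 0 := g1.sub g2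
    have hpos : ∀ t : ℝ, 0 ≤ t → 0 ≤ h t := by
      intro t ht
      have h1 : gauge Ω (z + t • v) ≤ gauge Ω z + gauge Ω (t • v) :=
        gauge_add_le hΩconv habs _ _
      have h2 : gauge Ω (t • v) = t * gauge Ω v := by
        rw [gauge_smul_of_nonneg ht, smul_eq_mul]
      simp only [hh]; linarith [h1, h2 ▸ h1]
    have h0 : h 0 = 0 := by simp [hh]
    have htend : Filter.Tendsto (slope h 0) (nhdsWithin 0 (Set.Ioi 0))
        (nhds (gauge Ω v - ⟪ρ' z, v⟫)) :=
      (hasDerivAt_iff_tendsto_slope.1 hd).mono_left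
        (nhdsWithin_mono _ (fun t ht => ne_of_gt ht))
    have hge : 0 ≤ gauge Ω v - ⟪ρ' z, v⟫ := by
      refine ge_of_tendsto htend ?_
      filter_upwards [self_mem_nhdsWithin] with t ht
      have ht' : (0 : ℝ) < t := ht
      have := hpos t ht'.le
      have hdiv : 0 ≤ h t / t := div_nonneg this ht'.le
      simpa [slope_def_field, h0] using hdiv
    linarith
  have hρpos : ∀ z : EuclideanSpace ℝ (Fin n), z ≠ 0 → 0 < gauge Ω z := fun z hz => (gauge_pos habs hbd).2 hz
  have hpne : ∀ z : EuclideanSpace ℝ (Fin n), z ≠ 0 → ρ' z ≠ 0 := by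
    intro z hz h0
    have := euler z hz
    rw [h0] at this
    simp at this
    exact (hρpos z hz).ne' this.symm
  -- the key identity : gauge Ω z • H' (ρ' z) = z
  have key : ∀ z : EuclideanSpace ℝ (Fin n), z ≠ 0 → gauge Ω z • H' (ρ' z) = z := by
    intro z hz
    set p := ρ' z with hpdef
    set r := gauge Ω z with hrdef
    have hr : 0 < r := hρpos z hz
    set y₀ : EuclideanSpace ℝ (Fin n) := r⁻¹ • z with hy₀def
    have hy₀ : y₀ ∈ Ω := by
      have hg : gauge Ω y₀ ≤ 1 := by
        rw [hy₀def, gauge_smul_of_nonneg (inv_nonneg.2 hr.le), smul_eq_mul,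
          inv_mul_cancel₀ hr.ne']
      have := (gauge_le_one_iff_mem_closure hΩconv hnhds).1 hg
      rwa [hΩcomp.isClosed.closure_eq] at this
    have hbdd : ∀ q : EuclideanSpace ℝ (Fin n), BddAbove ((fun y => ⟪q, y⟫) '' Ω) := fun q =>
      (hΩcomp.image (continuous_const.inner continuous_id)).bddAbove
    have hHle : ∀ q : EuclideanSpace ℝ (Fin n), ⟪q, y₀⟫ ≤ H q := by
      intro q
      rw [hH q]
      exact le_csSup (hbdd q) ⟨y₀, hy₀, rfl⟩
    have hpy₀ : ⟪p, y₀⟫ = 1 := by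
      rw [hy₀def, real_inner_smul_right, euler z hz, ← hrdef, inv_mul_cancel₀ hr.ne']
    have hHp : H p = ⟪p, y₀⟫ := by
      refine le_antisymm ?_ (hHle p)
      rw [hH p, hpy₀]
      refine csSup_le ⟨⟪p, (0 : EuclideanSpace ℝ (Fin n))⟫, ⟨0, interior_subset hΩ0, rfl⟩⟩ ?_
      rintro a ⟨y, hy, rfl⟩
      exact le_trans (subgrad z hz y) (gauge_le_one_of_mem hy)
    -- the function H q - ⟪q, y₀⟫ has a minimum at p
    set k : EuclideanSpace ℝ (Fin n) → ℝ := fun q => H q - ⟪q, y₀⟫ with hk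
    have hmin : IsLocalMin k p := by
      refine Filter.Eventually.of_forall fun q => ?_
      simp only [hk, hHp, sub_self]
      linarith [hHle q]
    have hlin : HasFDerivAt (fun q : EuclideanSpace ℝ (Fin n) => ⟪q, y₀⟫) (InnerProductSpace.toDual ℝ (EuclideanSpace ℝ (Fin n)) y₀) p := by
      have := (InnerProductSpace.toDual ℝ (EuclideanSpace ℝ (Fin n)) y₀).hasFDerivAt (x := p)
      refine this.congr_of_eventuallyEq (Filter.Eventually.of_forall fun q => ?_)
      simp [InnerProductSpace.toDual_apply_apply, real_inner_comm, mul_comm]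
    have hkderiv : HasFDerivAt k
        (InnerProductSpace.toDual ℝ (EuclideanSpace ℝ (Fin n)) (H' p) - InnerProductSpace.toDual ℝ (EuclideanSpace ℝ (Fin n)) y₀) p :=
      (hasGradientAt_iff_hasFDerivAt.1 (hH' p (hpne z hz))).sub hlin
    have hzero := hmin.hasFDerivAt_eq_zero hkderiv
    have hH'p : H' p = y₀ := by
      have happ : ∀ w : EuclideanSpace ℝ (Fin n), ⟪H' p - y₀, w⟫ = 0 := by
        intro w
        have := congrArg (fun L => L w) hzero
        simpa [InnerProductSpace.toDual_apply_apply, inner_sub_left] using this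
      have := happ (H' p - y₀)
      rw [inner_self_eq_zero] at this
      exact sub_eq_zero.1 this
    rw [hH'p, hy₀def, smul_smul, mul_inv_cancel₀ hr.ne', one_smul]
  -- differentiate the identity
  intro w
  have hp0 : ρ' x ≠ 0 := hpne x hx
  have hc : HasFDerivAt (gauge Ω) (InnerProductSpace.toDual ℝ (EuclideanSpace ℝ (Fin n)) (ρ' x)) x :=
    hasGradientAt_iff_hasFDerivAt.1 (hρ' x hx)
  have hf : HasFDerivAt (fun z => H' (ρ' z)) ((H'' (ρ' x)).comp (ρ'' x)) x :=
    (hH'' (ρ' x) hp0).comp x (hρ'' x hx)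
  have hF : HasFDerivAt (fun z => gauge Ω z • H' (ρ' z))
      (gauge Ω x • ((H'' (ρ' x)).comp (ρ'' x)) +
        ((InnerProductSpace.toDual ℝ (EuclideanSpace ℝ (Fin n)) (ρ' x) : EuclideanSpace ℝ (Fin n) →L[ℝ] ℝ)).smulRight (H' (ρ' x))) x :=
    hc.smul hf
  have hev : (fun z => gauge Ω z • H' (ρ' z)) =ᶠ[𝓝 x] id := by
    filter_upwards [isOpen_compl_singleton.mem_nhds hx] with z hz
    exact key z hz
  have hFid : HasFDerivAt (id : EuclideanSpace ℝ (Fin n) → EuclideanSpace ℝ (Fin n))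
      (gauge Ω x • ((H'' (ρ' x)).comp (ρ'' x)) +
        ((InnerProductSpace.toDual ℝ (EuclideanSpace ℝ (Fin n)) (ρ' x) : EuclideanSpace ℝ (Fin n) →L[ℝ] ℝ)).smulRight (H' (ρ' x))) x :=
    hF.congr_of_eventuallyEq hev.symm
  have huniq := hFid.unique (hasFDerivAt_id x)
  have := congrArg (fun L => L w) huniq
  simpa [ContinuousLinearMap.smulRight_apply, InnerProductSpace.toDual_apply_apply] using this.symm
end
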